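/- Let X be a vector field lying in the 2-plane H of a 2+2 structure with canonical 2-form U (i.e. i(X)U = 0) whose associated 1-form is integrable (dX ∧ X = 0). Then (X, δU) = 0, i.e. X is orthogonal to the codifferential of U. Consequently, X and the vector i(δU)*U are collinear within H. -/
import Mathlib


noncomputable section

/-!
Abstract component tensor calculus on a 4-dimensional pseudo-Riemannian manifold.
`R` plays the role of the ring of smooth functions, `pd i` of the coordinate partial
derivatives, `g`/`ginv` of the components of the metric and its inverse, and `Γ` of the
Christoffel symbols of the Levi-Civita connection.
-/

variable {R : Type*} [CommRing R] [Algebra ℝ R]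

/-- Covariant derivative ∇_i ω_k of a 1-form. -/
def cov1 (pd : Fin 4 → R → R) (Γ : Fin 4 → Fin 4 → Fin 4 → R)
    (ω : Fin 4 → R) (i k : Fin 4) : R :=
  pd i (ω k) - ∑ l, Γ l i k * ω l

/-- Covariant derivative ∇_i n^k of a vector field. -/
def covV (pd : Fin 4 → R → R) (Γ : Fin 4 → Fin 4 → Fin 4 → R)
    (n : Fin 4 → R) (i k : Fin 4) : R :=
  pd i (n k) + ∑ j, Γ k i j * n j

/-- Covariant derivative ∇_i A_{jk} of a covariant 2-tensor. -/
def cov2 (pd : Fin 4 → R → R) (Γ : Fin 4 → Fin 4 → Fin 4 → R)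
    (A : Fin 4 → Fin 4 → R) (i j k : Fin 4) : R :=
  pd i (A j k) - (∑ l, Γ l i j * A l k) - ∑ l, Γ l i k * A j l

/-- Hodge dual of a 2-form: (∗A)_{ab} = ½ η_{abmn} A^{mn}, where η = `vol` is the metric
volume 4-form. -/
def star2 (ginv : Fin 4 → Fin 4 → R) (vol : Fin 4 → Fin 4 → Fin 4 → Fin 4 → R)
    (A : Fin 4 → Fin 4 → R) (a b : Fin 4) : R :=
  algebraMap ℝ R (1/2) * ∑ m, ∑ n, ∑ p, ∑ q, vol a b m n * ginv m p * ginv n q * A p q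

/-- if X lies in the spacelike plane H of the 2+2 structure of the canonical
2-form U (i(X)U = 0) and its associated 1-form is integrable (dX♭ ∧ X♭ = 0), then
(X, δU) = 0; consequently X and the vector i(δU)∗U are collinear (within H). -/
theorem stmt6 {X : Type*}
    (pd : Fin 4 → (X → ℝ) → (X → ℝ)) (g ginv : Fin 4 → Fin 4 → (X → ℝ)) (Γ : Fin 4 → Fin 4 → Fin 4 → (X → ℝ))
    (hpd_add : ∀ i a b, pd i (a + b) = pd i a + pd i b)
    (hpd_mul : ∀ i a b, pd i (a * b) = pd i a * b + a * pd i b)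
    (hpd_const : ∀ i (c : ℝ), pd i (algebraMap ℝ (X → ℝ) c) = 0)
    (hpd_comm : ∀ i j a, pd i (pd j a) = pd j (pd i a))
    (hg_symm : ∀ i j, g i j = g j i)
    (hginv_symm : ∀ i j, ginv i j = ginv j i)
    (hginv : ∀ i j, (∑ k, g i k * ginv k j) = if i = j then (1 : X → ℝ) else 0)
    (hΓsymm : ∀ k i j, Γ k i j = Γ k j i)
    (hmc : ∀ k i j, pd k (g i j) = ∑ l, (Γ l k i * g l j + Γ l k j * g i l))
    (vol : Fin 4 → Fin 4 → Fin 4 → Fin 4 → (X → ℝ))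
    (hvolA1 : ∀ a b c d, vol a b c d = -vol b a c d)
    (hvolA2 : ∀ a b c d, vol a b c d = -vol a c b d)
    (hvolA3 : ∀ a b c d, vol a b c d = -vol a b d c)
    (hvolCC : ∀ i a b c d, pd i (vol a b c d) =
      ∑ l, (Γ l i a * vol l b c d + Γ l i b * vol a l c d +
            Γ l i c * vol a b l d + Γ l i d * vol a b c l))
    (hvolCon : ∀ a b c e,
      (∑ m, ∑ n, ∑ p, ∑ q, vol a b m n * ginv m p * ginv n q * vol c e p q)
        = -2 * (g a c * g b e - g a e * g b c))
    (U : Fin 4 → Fin 4 → (X → ℝ)) (hUanti : ∀ i j, U i j = -U j i)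
    (hUnit : (∑ a, ∑ b, ∑ p, ∑ q, U a b * ginv a p * ginv b q * U p q) = -2)
    (hUsimple :
      (∑ a, ∑ b, ∑ p, ∑ q, U a b * ginv a p * ginv b q * star2 ginv vol U p q) = 0)
    (hHspacelike : ∀ (x : X) (w : Fin 4 → ℝ),
      (∀ b, (∑ a, w a * U a b x) = 0) →
      (∑ i, ∑ j, g i j x * w i * w j) = 0 → w = 0)
    (Xv : Fin 4 → (X → ℝ)) (hXH : ∀ b, (∑ a, Xv a * U a b) = 0)
    (Xl : Fin 4 → (X → ℝ)) (hXl : ∀ m, Xl m = ∑ a, g m a * Xv a)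
    (hXint : ∀ m n p,
      (pd m (Xl n) - pd n (Xl m)) * Xl p + (pd n (Xl p) - pd p (Xl n)) * Xl m +
        (pd p (Xl m) - pd m (Xl p)) * Xl n = 0)
    (delU : Fin 4 → (X → ℝ))
    (hdelU : ∀ m, delU m = ∑ a, ∑ b, ginv a b * cov2 pd Γ U b a m)
    (Y : Fin 4 → (X → ℝ))
    (hY : ∀ n, Y n = ∑ a, (∑ b, ginv a b * delU b) * star2 ginv vol U a n) :
    (∑ m, Xv m * delU m) = 0 ∧ (∀ m n, Xl m * Y n = Xl n * Y m) := by
  classical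
  have hpdsum : ∀ i (f : Fin 4 → (X→ℝ)), pd i (∑ a, f a) = ∑ a, pd i (f a) :=
    fun i f => map_sum (AddMonoidHom.mk' (pd i) (hpd_add i)) f Finset.univ
  have hpd0 : ∀ i, pd i (0 : X→ℝ) = 0 := fun i => map_zero (AddMonoidHom.mk' (pd i) (hpd_add i))
  have hδ2 : ∀ i j, (∑ k, ginv i k * g k j) = if i = j then (1:X→ℝ) else 0 := by
    intro i j
    have h1 : (∑ k, ginv i k * g k j) = ∑ k, g j k * ginv k i := by
      refine Finset.sum_congr rfl fun k _ => ?_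
      rw [hginv_symm i k, hg_symm k j]; ring
    rw [h1, hginv j i]
    rcases eq_or_ne i j with h | h
    · subst h; simp
    · simp [h, Ne.symm h]
  have hdelta : ∀ (f : Fin 4 → (X→ℝ)) (c : Fin 4), (∑ b, (if b = c then (1:(X→ℝ)) else 0) * f b) = f c := by
    intro f c; simp [ite_mul]
  have hdelta' : ∀ (f : Fin 4 → (X→ℝ)) (c : Fin 4), (∑ b, (if c = b then (1:(X→ℝ)) else 0) * f b) = f c := by
    intro f c; simp [ite_mul]
  have hraise : ∀ c, (∑ a, ginv a c * Xl a) = Xv c := by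
    intro c
    calc (∑ a, ginv a c * Xl a) = ∑ a, ∑ b, ginv a c * (g a b * Xv b) := by
          refine Finset.sum_congr rfl fun a _ => ?_
          rw [hXl a, Finset.mul_sum]
      _ = ∑ b, (∑ a, ginv c a * g a b) * Xv b := by
          rw [Finset.sum_comm]
          refine Finset.sum_congr rfl fun b _ => ?_
          rw [Finset.sum_mul]
          refine Finset.sum_congr rfl fun a _ => ?_
          rw [hginv_symm a c]; ring
      _ = ∑ b, (if c = b then (1:X→ℝ) else 0) * Xv b := by
          refine Finset.sum_congr rfl fun b _ => ?_
          rw [hδ2 c b]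
      _ = Xv c := hdelta' _ c
  have hXH2 : ∀ a, (∑ b, Xv b * U a b) = 0 := by
    intro a
    have h1 : (∑ b, Xv b * U a b) = -∑ b, Xv b * U b a := by
      rw [← Finset.sum_neg_distrib]
      refine Finset.sum_congr rfl fun b _ => ?_
      rw [hUanti a b]; ring
    rw [h1, hXH a, neg_zero]
  -- Leibniz for i(X)U = 0
  have L2 : ∀ c b, (∑ a, (pd c (Xv a) * U a b + Xv a * pd c (U a b))) = 0 := by
    intro c b
    have h1 : (∑ a, (pd c (Xv a) * U a b + Xv a * pd c (U a b))) = pd c (∑ a, Xv a * U a b) := by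
      rw [hpdsum]
      exact Finset.sum_congr rfl fun a _ => (hpd_mul c (Xv a) (U a b)).symm
    rw [h1, hXH b, hpd0]
  have L3 : ∀ c b, (∑ a, covV pd Γ Xv c a * U a b) = -∑ a, Xv a * cov2 pd Γ U c a b := by
    intro c b
    have e : ∀ a : Fin 4, covV pd Γ Xv c a * U a b + Xv a * cov2 pd Γ U c a b
        = (pd c (Xv a) * U a b + Xv a * pd c (U a b))
          + ((∑ j, Γ a c j * Xv j * U a b) - ∑ l, Γ l c a * Xv a * U l b)
          - ∑ l, Γ l c b * (Xv a * U a l) := by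
      intro a
      simp only [covV, cov2, Fin.sum_univ_four]
      ring
    have esum := Finset.sum_congr rfl (fun a (_ : a ∈ Finset.univ) => e a)
    have key : (∑ a, (covV pd Γ Xv c a * U a b + Xv a * cov2 pd Γ U c a b)) = 0 := by
      rw [esum, Finset.sum_sub_distrib, Finset.sum_add_distrib, Finset.sum_sub_distrib, L2 c b]
      have h2 : (∑ a, ∑ j, Γ a c j * Xv j * U a b) = ∑ a, ∑ l, Γ l c a * Xv a * U l b := by
        exact Finset.sum_comm
      have h3 : (∑ a, ∑ l, Γ l c b * (Xv a * U a l)) = 0 := by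
        rw [Finset.sum_comm]
        refine Finset.sum_eq_zero fun l _ => ?_
        rw [← Finset.mul_sum, hXH l, mul_zero]
      rw [h2, h3]; ring
    have key2 : (∑ a, covV pd Γ Xv c a * U a b) + (∑ a, Xv a * cov2 pd Γ U c a b) = 0 := by
      rw [← Finset.sum_add_distrib]; exact key
    linear_combination key2
  have hpdneg : ∀ i (f : X→ℝ), pd i (-f) = -pd i f :=
    fun i f => map_neg (AddMonoidHom.mk' (pd i) (hpd_add i)) f
  have L4 : ∀ i j k, cov2 pd Γ U i j k = -cov2 pd Γ U i k j := by
    intro i j k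
    have h1 : pd i (U j k) = -pd i (U k j) := by
      rw [show U j k = -U k j from hUanti j k, hpdneg]
    have h2 : (∑ l, Γ l i j * U l k) = -∑ l, Γ l i j * U k l := by
      rw [← Finset.sum_neg_distrib]
      exact Finset.sum_congr rfl fun l _ => by rw [hUanti l k]; ring
    have h3 : (∑ l, Γ l i k * U j l) = -∑ l, Γ l i k * U l j := by
      rw [← Finset.sum_neg_distrib]
      exact Finset.sum_congr rfl fun l _ => by rw [hUanti j l]; ring
    simp only [cov2]
    rw [h1, h2, h3]; ring
  have L5 : ∀ c d, cov1 pd Γ Xl c d = ∑ m, g d m * covV pd Γ Xv c m := by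
    intro c d
    have hpdXl : pd c (Xl d) = ∑ a, (pd c (g d a) * Xv a + g d a * pd c (Xv a)) := by
      rw [hXl d, hpdsum]
      exact Finset.sum_congr rfl fun a _ => hpd_mul c (g d a) (Xv a)
    simp only [cov1, covV]
    rw [hpdXl]
    simp only [hmc, hXl, Fin.sum_univ_four]
    ring
  have L6 : ∀ c m, covV pd Γ Xv c m = ∑ d, ginv m d * cov1 pd Γ Xl c d := by
    intro c m
    calc covV pd Γ Xv c m
        = ∑ e, (if m = e then (1:X→ℝ) else 0) * covV pd Γ Xv c e := (hdelta' _ m).symm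
      _ = ∑ e, (∑ d, ginv m d * g d e) * covV pd Γ Xv c e := by
          refine Finset.sum_congr rfl fun e _ => ?_
          rw [hδ2 m e]
      _ = ∑ e, ∑ d, ginv m d * g d e * covV pd Γ Xv c e := by
          refine Finset.sum_congr rfl fun e _ => ?_
          rw [Finset.sum_mul]
      _ = ∑ d, ∑ e, ginv m d * g d e * covV pd Γ Xv c e := Finset.sum_comm
      _ = ∑ d, ginv m d * ∑ e, g d e * covV pd Γ Xv c e := by
          refine Finset.sum_congr rfl fun d _ => ?_
          rw [Finset.mul_sum]
          exact Finset.sum_congr rfl fun e _ => by ring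
      _ = ∑ d, ginv m d * cov1 pd Γ Xl c d := by
          refine Finset.sum_congr rfl fun d _ => ?_
          rw [L5 c d]
  -- Step 7: express the goal sum via cov1
  have hGQ : (∑ m, Xv m * delU m)
      = ∑ a, ∑ b, ∑ m, ∑ d, ginv a b * (ginv m d * (cov1 pd Γ Xl b d * U m a)) := by
    calc (∑ m, Xv m * delU m)
        = ∑ m, ∑ a, ∑ b, ginv a b * (Xv m * cov2 pd Γ U b a m) := by
          refine Finset.sum_congr rfl fun m _ => ?_
          rw [hdelU m, Finset.mul_sum]
          refine Finset.sum_congr rfl fun a _ => ?_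
          rw [Finset.mul_sum]
          exact Finset.sum_congr rfl fun b _ => by ring
      _ = ∑ a, ∑ m, ∑ b, ginv a b * (Xv m * cov2 pd Γ U b a m) := Finset.sum_comm
      _ = ∑ a, ∑ b, ∑ m, ginv a b * (Xv m * cov2 pd Γ U b a m) :=
          Finset.sum_congr rfl fun a _ => Finset.sum_comm
      _ = ∑ a, ∑ b, ginv a b * ∑ m, Xv m * cov2 pd Γ U b a m := by
          refine Finset.sum_congr rfl fun a _ => Finset.sum_congr rfl fun b _ => ?_
          rw [Finset.mul_sum]
      _ = ∑ a, ∑ b, ginv a b * ∑ m, covV pd Γ Xv b m * U m a := by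
          refine Finset.sum_congr rfl fun a _ => Finset.sum_congr rfl fun b _ => ?_
          congr 1
          have h1 : (∑ m, Xv m * cov2 pd Γ U b a m) = -∑ m, Xv m * cov2 pd Γ U b m a := by
            rw [← Finset.sum_neg_distrib]
            refine Finset.sum_congr rfl fun m _ => ?_
            rw [L4 b a m]; ring
          rw [h1, L3 b a]
      _ = ∑ a, ∑ b, ∑ m, ∑ d, ginv a b * (ginv m d * (cov1 pd Γ Xl b d * U m a)) := by
          refine Finset.sum_congr rfl fun a _ => Finset.sum_congr rfl fun b _ => ?_
          rw [Finset.mul_sum]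
          refine Finset.sum_congr rfl fun m _ => ?_
          rw [L6 b m, Finset.sum_mul, Finset.mul_sum]
          exact Finset.sum_congr rfl fun d _ => by ring
  have sumadd4 : ∀ (F G : Fin 4 → Fin 4 → Fin 4 → Fin 4 → (X→ℝ)),
      (∑ a, ∑ b, ∑ m, ∑ d, F a b m d) + (∑ a, ∑ b, ∑ m, ∑ d, G a b m d)
        = ∑ a, ∑ b, ∑ m, ∑ d, (F a b m d + G a b m d) := by
    intro F G
    rw [← Finset.sum_add_distrib]
    refine Finset.sum_congr rfl fun a _ => ?_
    rw [← Finset.sum_add_distrib]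
    refine Finset.sum_congr rfl fun b _ => ?_
    rw [← Finset.sum_add_distrib]
    refine Finset.sum_congr rfl fun m _ => ?_
    rw [← Finset.sum_add_distrib]
  have hQswap : (∑ a, ∑ b, ∑ m, ∑ d, ginv a b * (ginv m d * (cov1 pd Γ Xl b d * U m a)))
      = ∑ a, ∑ b, ∑ m, ∑ d, ginv m d * (ginv a b * (cov1 pd Γ Xl d b * U a m)) := by
    calc (∑ a, ∑ b, ∑ m, ∑ d, ginv a b * (ginv m d * (cov1 pd Γ Xl b d * U m a)))
        = ∑ a, ∑ m, ∑ b, ∑ d, ginv a b * (ginv m d * (cov1 pd Γ Xl b d * U m a)) :=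
          Finset.sum_congr rfl fun a _ => Finset.sum_comm
      _ = ∑ m, ∑ a, ∑ b, ∑ d, ginv a b * (ginv m d * (cov1 pd Γ Xl b d * U m a)) :=
          Finset.sum_comm
      _ = ∑ m, ∑ a, ∑ d, ∑ b, ginv a b * (ginv m d * (cov1 pd Γ Xl b d * U m a)) :=
          Finset.sum_congr rfl fun m _ => Finset.sum_congr rfl fun a _ => Finset.sum_comm
      _ = ∑ m, ∑ d, ∑ a, ∑ b, ginv a b * (ginv m d * (cov1 pd Γ Xl b d * U m a)) :=
          Finset.sum_congr rfl fun m _ => Finset.sum_comm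
  have h2GT : (2:(X→ℝ)) * (∑ m, Xv m * delU m)
      = ∑ a, ∑ b, ∑ m, ∑ d, ginv a b * (ginv m d * ((pd b (Xl d) - pd d (Xl b)) * U m a)) := by
    rw [hGQ, two_mul]
    nth_rewrite 2 [hQswap]
    rw [sumadd4]
    refine Finset.sum_congr rfl fun a _ => Finset.sum_congr rfl fun b _ =>
      Finset.sum_congr rfl fun m _ => Finset.sum_congr rfl fun d _ => ?_
    simp only [cov1, Fin.sum_univ_four]
    rw [hUanti a m, hΓsymm 0 d b, hΓsymm 1 d b, hΓsymm 2 d b, hΓsymm 3 d b]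
    ring
  -- Step 9: contraction of the integrability condition
  have hTW : (∑ a, ∑ b, ∑ m, ∑ d, ginv a b * (ginv m d * ((pd b (Xl d) - pd d (Xl b)) * U m a)))
      = ∑ b, ∑ d, (pd b (Xl d) - pd d (Xl b)) * ∑ a, ∑ m, ginv a b * (ginv m d * U m a) := by
    calc (∑ a, ∑ b, ∑ m, ∑ d, ginv a b * (ginv m d * ((pd b (Xl d) - pd d (Xl b)) * U m a)))
        = ∑ b, ∑ a, ∑ m, ∑ d, ginv a b * (ginv m d * ((pd b (Xl d) - pd d (Xl b)) * U m a)) :=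
          Finset.sum_comm
      _ = ∑ b, ∑ a, ∑ d, ∑ m, ginv a b * (ginv m d * ((pd b (Xl d) - pd d (Xl b)) * U m a)) :=
          Finset.sum_congr rfl fun b _ => Finset.sum_congr rfl fun a _ => Finset.sum_comm
      _ = ∑ b, ∑ d, ∑ a, ∑ m, ginv a b * (ginv m d * ((pd b (Xl d) - pd d (Xl b)) * U m a)) :=
          Finset.sum_congr rfl fun b _ => Finset.sum_comm
      _ = ∑ b, ∑ d, (pd b (Xl d) - pd d (Xl b)) * ∑ a, ∑ m, ginv a b * (ginv m d * U m a) := by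
          refine Finset.sum_congr rfl fun b _ => Finset.sum_congr rfl fun d _ => ?_
          rw [Finset.mul_sum]
          refine Finset.sum_congr rfl fun a _ => ?_
          rw [Finset.mul_sum]
          exact Finset.sum_congr rfl fun m _ => by ring
  have hK1a : ∀ d, (∑ b, Xl b * ∑ a, ∑ m, ginv a b * (ginv m d * U m a)) = 0 := by
    intro d
    have h1 : (∑ b, Xl b * ∑ a, ∑ m, ginv a b * (ginv m d * U m a))
        = ∑ a, ∑ m, (∑ b, ginv b a * Xl b) * (ginv m d * U m a) := by
      calc (∑ b, Xl b * ∑ a, ∑ m, ginv a b * (ginv m d * U m a))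
          = ∑ b, ∑ a, ∑ m, Xl b * (ginv a b * (ginv m d * U m a)) := by
            refine Finset.sum_congr rfl fun b _ => ?_
            rw [Finset.mul_sum]
            refine Finset.sum_congr rfl fun a _ => ?_
            rw [Finset.mul_sum]
        _ = ∑ a, ∑ b, ∑ m, Xl b * (ginv a b * (ginv m d * U m a)) := Finset.sum_comm
        _ = ∑ a, ∑ m, ∑ b, Xl b * (ginv a b * (ginv m d * U m a)) :=
            Finset.sum_congr rfl fun a _ => Finset.sum_comm
        _ = ∑ a, ∑ m, (∑ b, ginv b a * Xl b) * (ginv m d * U m a) := by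
            refine Finset.sum_congr rfl fun a _ => Finset.sum_congr rfl fun m _ => ?_
            rw [Finset.sum_mul]
            exact Finset.sum_congr rfl fun b _ => by rw [hginv_symm b a]; ring
    rw [h1]
    calc (∑ a, ∑ m, (∑ b, ginv b a * Xl b) * (ginv m d * U m a))
        = ∑ a, ∑ m, Xv a * (ginv m d * U m a) := by
          refine Finset.sum_congr rfl fun a _ => Finset.sum_congr rfl fun m _ => ?_
          rw [hraise a]
      _ = ∑ m, ∑ a, Xv a * (ginv m d * U m a) := Finset.sum_comm
      _ = ∑ m, ginv m d * ∑ a, Xv a * U m a := by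
          refine Finset.sum_congr rfl fun m _ => ?_
          rw [Finset.mul_sum]
          exact Finset.sum_congr rfl fun a _ => by ring
      _ = 0 := Finset.sum_eq_zero fun m _ => by rw [hXH2 m, mul_zero]
  have hK1b : ∀ b, (∑ d, Xl d * ∑ a, ∑ m, ginv a b * (ginv m d * U m a)) = 0 := by
    intro b
    have h1 : (∑ d, Xl d * ∑ a, ∑ m, ginv a b * (ginv m d * U m a))
        = ∑ a, ∑ m, ginv a b * ((∑ d, ginv d m * Xl d) * U m a) := by
      calc (∑ d, Xl d * ∑ a, ∑ m, ginv a b * (ginv m d * U m a))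
          = ∑ d, ∑ a, ∑ m, Xl d * (ginv a b * (ginv m d * U m a)) := by
            refine Finset.sum_congr rfl fun d _ => ?_
            rw [Finset.mul_sum]
            refine Finset.sum_congr rfl fun a _ => ?_
            rw [Finset.mul_sum]
        _ = ∑ a, ∑ d, ∑ m, Xl d * (ginv a b * (ginv m d * U m a)) := Finset.sum_comm
        _ = ∑ a, ∑ m, ∑ d, Xl d * (ginv a b * (ginv m d * U m a)) :=
            Finset.sum_congr rfl fun a _ => Finset.sum_comm
        _ = ∑ a, ∑ m, ginv a b * ((∑ d, ginv d m * Xl d) * U m a) := by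
            refine Finset.sum_congr rfl fun a _ => Finset.sum_congr rfl fun m _ => ?_
            rw [Finset.sum_mul, Finset.mul_sum]
            exact Finset.sum_congr rfl fun d _ => by rw [hginv_symm d m]; ring
    rw [h1]
    calc (∑ a, ∑ m, ginv a b * ((∑ d, ginv d m * Xl d) * U m a))
        = ∑ a, ∑ m, ginv a b * (Xv m * U m a) := by
          refine Finset.sum_congr rfl fun a _ => Finset.sum_congr rfl fun m _ => ?_
          rw [hraise m]
      _ = ∑ a, ginv a b * ∑ m, Xv m * U m a := by
          refine Finset.sum_congr rfl fun a _ => ?_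
          rw [Finset.mul_sum]
      _ = 0 := Finset.sum_eq_zero fun a _ => by rw [hXH a, mul_zero]
  -- the contraction of hXint
  have hbig : (∑ b, ∑ d, ∑ p,
      ((pd b (Xl d) - pd d (Xl b)) * Xl p + (pd d (Xl p) - pd p (Xl d)) * Xl b +
        (pd p (Xl b) - pd b (Xl p)) * Xl d)
        * ((∑ a, ∑ m, ginv a b * (ginv m d * U m a)) * Xv p)) = 0 :=
    Finset.sum_eq_zero fun b _ => Finset.sum_eq_zero fun d _ => Finset.sum_eq_zero fun p _ => by
      rw [hXint b d p, zero_mul]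
  have hS1 : (∑ b, ∑ d, ∑ p,
      ((pd b (Xl d) - pd d (Xl b)) * Xl p) * ((∑ a, ∑ m, ginv a b * (ginv m d * U m a)) * Xv p))
      = (∑ b, ∑ d, (pd b (Xl d) - pd d (Xl b)) * ∑ a, ∑ m, ginv a b * (ginv m d * U m a))
        * ∑ p, Xl p * Xv p := by
    rw [Finset.sum_mul]
    refine Finset.sum_congr rfl fun b _ => ?_
    rw [Finset.sum_mul]
    refine Finset.sum_congr rfl fun d _ => ?_
    rw [Finset.mul_sum]
    exact Finset.sum_congr rfl fun p _ => by ring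
  have hS2 : (∑ b, ∑ d, ∑ p,
      ((pd d (Xl p) - pd p (Xl d)) * Xl b) * ((∑ a, ∑ m, ginv a b * (ginv m d * U m a)) * Xv p))
      = 0 := by
    calc (∑ b, ∑ d, ∑ p,
        ((pd d (Xl p) - pd p (Xl d)) * Xl b) * ((∑ a, ∑ m, ginv a b * (ginv m d * U m a)) * Xv p))
        = ∑ d, ∑ b, ∑ p,
          ((pd d (Xl p) - pd p (Xl d)) * Xl b) * ((∑ a, ∑ m, ginv a b * (ginv m d * U m a)) * Xv p) :=
          Finset.sum_comm
      _ = ∑ d, ∑ p, ∑ b,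
          ((pd d (Xl p) - pd p (Xl d)) * Xl b) * ((∑ a, ∑ m, ginv a b * (ginv m d * U m a)) * Xv p) :=
          Finset.sum_congr rfl fun d _ => Finset.sum_comm
      _ = ∑ d, ∑ p, ((pd d (Xl p) - pd p (Xl d)) * Xv p)
            * ∑ b, Xl b * ∑ a, ∑ m, ginv a b * (ginv m d * U m a) := by
          refine Finset.sum_congr rfl fun d _ => Finset.sum_congr rfl fun p _ => ?_
          rw [Finset.mul_sum]
          exact Finset.sum_congr rfl fun b _ => by ring
      _ = 0 := Finset.sum_eq_zero fun d _ => Finset.sum_eq_zero fun p _ => by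
          rw [hK1a d, mul_zero]
  have hS3 : (∑ b, ∑ d, ∑ p,
      ((pd p (Xl b) - pd b (Xl p)) * Xl d) * ((∑ a, ∑ m, ginv a b * (ginv m d * U m a)) * Xv p))
      = 0 := by
    calc (∑ b, ∑ d, ∑ p,
        ((pd p (Xl b) - pd b (Xl p)) * Xl d) * ((∑ a, ∑ m, ginv a b * (ginv m d * U m a)) * Xv p))
        = ∑ b, ∑ p, ∑ d,
          ((pd p (Xl b) - pd b (Xl p)) * Xl d) * ((∑ a, ∑ m, ginv a b * (ginv m d * U m a)) * Xv p) :=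
          Finset.sum_congr rfl fun b _ => Finset.sum_comm
      _ = ∑ b, ∑ p, ((pd p (Xl b) - pd b (Xl p)) * Xv p)
            * ∑ d, Xl d * ∑ a, ∑ m, ginv a b * (ginv m d * U m a) := by
          refine Finset.sum_congr rfl fun b _ => Finset.sum_congr rfl fun p _ => ?_
          rw [Finset.mul_sum]
          exact Finset.sum_congr rfl fun d _ => by ring
      _ = 0 := Finset.sum_eq_zero fun b _ => Finset.sum_eq_zero fun p _ => by
          rw [hK1b b, mul_zero]
  have hsplit : (∑ b, ∑ d, ∑ p,
      ((pd b (Xl d) - pd d (Xl b)) * Xl p + (pd d (Xl p) - pd p (Xl d)) * Xl b +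
        (pd p (Xl b) - pd b (Xl p)) * Xl d)
        * ((∑ a, ∑ m, ginv a b * (ginv m d * U m a)) * Xv p))
      = (∑ b, ∑ d, ∑ p,
          ((pd b (Xl d) - pd d (Xl b)) * Xl p) * ((∑ a, ∑ m, ginv a b * (ginv m d * U m a)) * Xv p))
        + (∑ b, ∑ d, ∑ p,
          ((pd d (Xl p) - pd p (Xl d)) * Xl b) * ((∑ a, ∑ m, ginv a b * (ginv m d * U m a)) * Xv p))
        + (∑ b, ∑ d, ∑ p,
          ((pd p (Xl b) - pd b (Xl p)) * Xl d) * ((∑ a, ∑ m, ginv a b * (ginv m d * U m a)) * Xv p)) := by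
    rw [← Finset.sum_add_distrib, ← Finset.sum_add_distrib]
    refine Finset.sum_congr rfl fun b _ => ?_
    rw [← Finset.sum_add_distrib, ← Finset.sum_add_distrib]
    refine Finset.sum_congr rfl fun d _ => ?_
    rw [← Finset.sum_add_distrib, ← Finset.sum_add_distrib]
    exact Finset.sum_congr rfl fun p _ => by ring
  have hTN : ((2:(X→ℝ)) * (∑ m, Xv m * delU m)) * ∑ p, Xl p * Xv p = 0 := by
    rw [h2GT, hTW, ← hS1]
    have := hbig
    rw [hsplit, hS2, hS3] at this
    linear_combination this
  -- Step 10: pointwise conclusion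
  have hev : ∀ (f : Fin 4 → (X→ℝ)) (x : X), (∑ m, f m) x = ∑ m, f m x :=
    fun f x => Finset.sum_apply x Finset.univ f
  have hG0 : (∑ m, Xv m * delU m) = 0 := by
      funext x
      show (∑ m, Xv m * delU m) x = (0:(X→ℝ)) x
      have hNX : (∑ p, Xl p * Xv p) x = ∑ i, ∑ j, g i j x * Xv i x * Xv j x := by
        rw [hev]
        calc (∑ p, (Xl p * Xv p) x) = ∑ p, ∑ a, g p a x * Xv p x * Xv a x := by
              refine Finset.sum_congr rfl fun p _ => ?_
              rw [Pi.mul_apply, hXl p, hev, Finset.sum_mul]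
              exact Finset.sum_congr rfl fun a _ => by rw [Pi.mul_apply]; ring
          _ = ∑ i, ∑ j, g i j x * Xv i x * Xv j x := rfl
      by_cases hnx : (∑ i, ∑ j, g i j x * Xv i x * Xv j x) = 0
      · have hw := hHspacelike x (fun a => Xv a x) (fun b => by
          have := congrFun (hXH b) x
          rw [hev] at this
          simpa using this) hnx
        rw [hev, Pi.zero_apply]
        refine Finset.sum_eq_zero fun m _ => ?_
        rw [Pi.mul_apply, show Xv m x = 0 from congrFun hw m, zero_mul]
      · have h0 := congrFun hTN x
        rw [Pi.mul_apply, Pi.mul_apply, Pi.zero_apply, hNX] at h0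
        have h2 : (2:(X→ℝ)) x = (2:ℝ) := rfl
        rw [h2] at h0
        have := mul_eq_zero.mp h0
        rcases this with h | h
        · rcases mul_eq_zero.mp h with h' | h'
          · norm_num at h'
          · rw [Pi.zero_apply]; exact h'
        · exact absurd h hnx
  refine ⟨hG0, ?_⟩
  have hhalf : ∀ v : X → ℝ, v = -v → v = 0 := by
    intro v h
    funext x
    have := congrFun h x
    simp only [Pi.neg_apply, Pi.zero_apply] at this ⊢
    linarith
  have hXH2 : ∀ a, (∑ b, Xv b * U a b) = 0 := by
    intro a
    have h1 : (∑ b, Xv b * U a b) = -∑ b, Xv b * U b a := by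
      rw [← Finset.sum_neg_distrib]
      exact Finset.sum_congr rfl fun b _ => by rw [hUanti a b]; ring
    rw [h1, hXH a, neg_zero]
  have hδ2 : ∀ i j, (∑ k, ginv i k * g k j) = if i = j then (1:X→ℝ) else 0 := by
    intro i j
    have h1 : (∑ k, ginv i k * g k j) = ∑ k, g j k * ginv k i := by
      refine Finset.sum_congr rfl fun k _ => ?_
      rw [hginv_symm i k, hg_symm k j]; ring
    rw [h1, hginv j i]
    rcases eq_or_ne i j with h | h
    · subst h; simp
    · simp [h, Ne.symm h]
  have hdelta' : ∀ (f : Fin 4 → (X→ℝ)) (c : Fin 4), (∑ b, (if c = b then (1:(X→ℝ)) else 0) * f b) = f c := by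
    intro f c; simp [ite_mul]
  have hraise : ∀ c, (∑ a, ginv a c * Xl a) = Xv c := by
    intro c
    calc (∑ a, ginv a c * Xl a) = ∑ a, ∑ b, ginv a c * (g a b * Xv b) := by
          refine Finset.sum_congr rfl fun a _ => ?_
          rw [hXl a, Finset.mul_sum]
      _ = ∑ b, (∑ a, ginv c a * g a b) * Xv b := by
          rw [Finset.sum_comm]
          refine Finset.sum_congr rfl fun b _ => ?_
          rw [Finset.sum_mul]
          refine Finset.sum_congr rfl fun a _ => ?_
          rw [hginv_symm a c]; ring
      _ = ∑ b, (if c = b then (1:X→ℝ) else 0) * Xv b := by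
          refine Finset.sum_congr rfl fun b _ => ?_
          rw [hδ2 c b]
      _ = Xv c := hdelta' _ c
  -- vol vanishing lemmas
  have z12 : ∀ a c d, vol a a c d = 0 := fun a c d => hhalf _ (hvolA1 a a c d)
  have z23 : ∀ a b d, vol a b b d = 0 := fun a b d => hhalf _ (hvolA2 a b b d)
  have z34 : ∀ a b c, vol a b c c = 0 := fun a b c => hhalf _ (hvolA3 a b c c)
  have z13 : ∀ a b d, vol a b a d = 0 := by
    intro a b d; rw [hvolA2 a b a d, z12, neg_zero]
  have z24 : ∀ a b c, vol a b c b = 0 := by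
    intro a b c; rw [hvolA3 a b c b, z23, neg_zero]
  have z14 : ∀ a b c, vol a b c a = 0 := by
    intro a b c; rw [hvolA3 a b c a, z13, neg_zero]
  have pigeon : ∀ m n p a b : Fin 4,
      m = n ∨ m = p ∨ m = a ∨ m = b ∨ n = p ∨ n = a ∨ n = b ∨ p = a ∨ p = b ∨ a = b := by decide
  have eps5 : ∀ (f : Fin 4 → (X→ℝ)) (m n p a b : Fin 4),
      f m * vol n p a b - f n * vol m p a b + f p * vol m n a b
        - f a * vol m n p b + f b * vol m n p a = 0 := by
    intro f m n p a b
    rcases pigeon m n p a b with h|h|h|h|h|h|h|h|h|h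
    · subst h; rw [z12, z12, z12]; ring
    · subst h; rw [z12, z13, z13, hvolA1 m n a b]; ring
    · subst h; rw [z13, z13, z14, hvolA1 m n p b, hvolA2 n m p b]; ring
    · subst h; rw [z14, z14, z14, hvolA1 m n p a, hvolA2 n m p a, hvolA3 n p m a]; ring
    · subst h; rw [z12, z23, z23]; ring
    · subst h; rw [z13, z23, z24, hvolA2 m n p b]; ring
    · subst h; rw [z14, z24, z24, hvolA2 m n p a, hvolA3 m p n a]; ring
    · subst h; rw [z23, z23, z34]; ring
    · subst h; rw [z24, z24, z34, hvolA3 m n a p]; ring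
    · subst h; rw [z34, z34, z34]; ring
  have hhalf2 : ∀ v : X → ℝ, (2:(X→ℝ)) * v = 0 → v = 0 := by
    intro v h
    funext x
    have h0 := congrFun h x
    have h2 : ((2:(X→ℝ)) * v) x = 2 * v x := rfl
    rw [h2] at h0
    have : (0:(X→ℝ)) x = 0 := rfl
    rw [this] at h0
    show v x = 0
    linarith
  have hSanti : ∀ a b, star2 ginv vol U a b = -star2 ginv vol U b a := by
    intro a b
    simp only [star2]
    have h1 : (∑ m, ∑ n, ∑ p, ∑ q, vol a b m n * ginv m p * ginv n q * U p q)
        = -∑ m, ∑ n, ∑ p, ∑ q, vol b a m n * ginv m p * ginv n q * U p q := by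
      rw [← Finset.sum_neg_distrib]
      refine Finset.sum_congr rfl fun m _ => ?_
      rw [← Finset.sum_neg_distrib]
      refine Finset.sum_congr rfl fun n _ => ?_
      rw [← Finset.sum_neg_distrib]
      refine Finset.sum_congr rfl fun p _ => ?_
      rw [← Finset.sum_neg_distrib]
      refine Finset.sum_congr rfl fun q _ => ?_
      rw [hvolA1 a b m n]; ring
    rw [h1]; ring
  have hUu : ∀ n p, (∑ a, ∑ b, (∑ c, ∑ d, ginv a c * (ginv b d * U c d)) * vol n p a b)
      = 2 * star2 ginv vol U n p := by
    intro n p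
    have h2 : (2:(X→ℝ)) * algebraMap ℝ (X→ℝ) (1/2) = 1 := by
      rw [show (2 : X→ℝ) = algebraMap ℝ (X → ℝ) 2 from (map_ofNat _ 2).symm, ← map_mul]
      norm_num
    simp only [star2]
    rw [← mul_assoc, h2, one_mul]
    refine Finset.sum_congr rfl fun a _ => Finset.sum_congr rfl fun b _ => ?_
    rw [Finset.sum_mul]
    refine Finset.sum_congr rfl fun c _ => ?_
    rw [Finset.sum_mul]
    exact Finset.sum_congr rfl fun d _ => by ring
  have hUuX : ∀ b, (∑ a, Xl a * ∑ c, ∑ d, ginv a c * (ginv b d * U c d)) = 0 := by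
    intro b
    have h1 : (∑ a, Xl a * ∑ c, ∑ d, ginv a c * (ginv b d * U c d))
        = ∑ c, ∑ d, (∑ a, ginv a c * Xl a) * (ginv b d * U c d) := by
      calc (∑ a, Xl a * ∑ c, ∑ d, ginv a c * (ginv b d * U c d))
          = ∑ a, ∑ c, ∑ d, Xl a * (ginv a c * (ginv b d * U c d)) := by
            refine Finset.sum_congr rfl fun a _ => ?_
            rw [Finset.mul_sum]
            refine Finset.sum_congr rfl fun c _ => ?_
            rw [Finset.mul_sum]
        _ = ∑ c, ∑ a, ∑ d, Xl a * (ginv a c * (ginv b d * U c d)) := Finset.sum_comm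
        _ = ∑ c, ∑ d, ∑ a, Xl a * (ginv a c * (ginv b d * U c d)) :=
            Finset.sum_congr rfl fun c _ => Finset.sum_comm
        _ = ∑ c, ∑ d, (∑ a, ginv a c * Xl a) * (ginv b d * U c d) := by
            refine Finset.sum_congr rfl fun c _ => Finset.sum_congr rfl fun d _ => ?_
            rw [Finset.sum_mul]
            exact Finset.sum_congr rfl fun a _ => by ring
    rw [h1]
    calc (∑ c, ∑ d, (∑ a, ginv a c * Xl a) * (ginv b d * U c d))
        = ∑ c, ∑ d, Xv c * (ginv b d * U c d) := by
          refine Finset.sum_congr rfl fun c _ => Finset.sum_congr rfl fun d _ => ?_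
          rw [hraise c]
      _ = ∑ d, ginv b d * ∑ c, Xv c * U c d := by
          rw [Finset.sum_comm]
          refine Finset.sum_congr rfl fun d _ => ?_
          rw [Finset.mul_sum]
          exact Finset.sum_congr rfl fun c _ => by ring
      _ = 0 := Finset.sum_eq_zero fun d _ => by rw [hXH d, mul_zero]
  have hUuX2 : ∀ a, (∑ b, Xl b * ∑ c, ∑ d, ginv a c * (ginv b d * U c d)) = 0 := by
    intro a
    have h1 : (∑ b, Xl b * ∑ c, ∑ d, ginv a c * (ginv b d * U c d))
        = ∑ c, ∑ d, ginv a c * ((∑ b, ginv b d * Xl b) * U c d) := by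
      calc (∑ b, Xl b * ∑ c, ∑ d, ginv a c * (ginv b d * U c d))
          = ∑ b, ∑ c, ∑ d, Xl b * (ginv a c * (ginv b d * U c d)) := by
            refine Finset.sum_congr rfl fun b _ => ?_
            rw [Finset.mul_sum]
            refine Finset.sum_congr rfl fun c _ => ?_
            rw [Finset.mul_sum]
        _ = ∑ c, ∑ b, ∑ d, Xl b * (ginv a c * (ginv b d * U c d)) := Finset.sum_comm
        _ = ∑ c, ∑ d, ∑ b, Xl b * (ginv a c * (ginv b d * U c d)) :=
            Finset.sum_congr rfl fun c _ => Finset.sum_comm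
        _ = ∑ c, ∑ d, ginv a c * ((∑ b, ginv b d * Xl b) * U c d) := by
            refine Finset.sum_congr rfl fun c _ => Finset.sum_congr rfl fun d _ => ?_
            rw [Finset.sum_mul, Finset.mul_sum]
            exact Finset.sum_congr rfl fun b _ => by ring
    rw [h1]
    calc (∑ c, ∑ d, ginv a c * ((∑ b, ginv b d * Xl b) * U c d))
        = ∑ c, ginv a c * ∑ d, Xv d * U c d := by
          refine Finset.sum_congr rfl fun c _ => ?_
          rw [Finset.mul_sum]
          refine Finset.sum_congr rfl fun d _ => ?_
          rw [hraise d]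
      _ = 0 := Finset.sum_eq_zero fun c _ => by rw [hXH2 c, mul_zero]
  have hXstarU : ∀ m n p, Xl m * star2 ginv vol U n p + Xl n * star2 ginv vol U p m
      + Xl p * star2 ginv vol U m n = 0 := by
    intro m n p
    have hbig : (∑ a, ∑ b, (∑ c, ∑ d, ginv a c * (ginv b d * U c d)) *
        (Xl m * vol n p a b - Xl n * vol m p a b + Xl p * vol m n a b
          - Xl a * vol m n p b + Xl b * vol m n p a)) = 0 :=
      Finset.sum_eq_zero fun a _ => Finset.sum_eq_zero fun b _ => by
        rw [eps5 Xl m n p a b, mul_zero]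
    have hsplit : (∑ a, ∑ b, (∑ c, ∑ d, ginv a c * (ginv b d * U c d)) *
        (Xl m * vol n p a b - Xl n * vol m p a b + Xl p * vol m n a b
          - Xl a * vol m n p b + Xl b * vol m n p a))
        = Xl m * (∑ a, ∑ b, (∑ c, ∑ d, ginv a c * (ginv b d * U c d)) * vol n p a b)
          - Xl n * (∑ a, ∑ b, (∑ c, ∑ d, ginv a c * (ginv b d * U c d)) * vol m p a b)
          + Xl p * (∑ a, ∑ b, (∑ c, ∑ d, ginv a c * (ginv b d * U c d)) * vol m n a b)
          - (∑ a, ∑ b, (∑ c, ∑ d, ginv a c * (ginv b d * U c d)) * (Xl a * vol m n p b))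
          + (∑ a, ∑ b, (∑ c, ∑ d, ginv a c * (ginv b d * U c d)) * (Xl b * vol m n p a)) := by
      rw [Finset.mul_sum, Finset.mul_sum, Finset.mul_sum,
        ← Finset.sum_sub_distrib, ← Finset.sum_add_distrib, ← Finset.sum_sub_distrib,
        ← Finset.sum_add_distrib]
      refine Finset.sum_congr rfl fun a _ => ?_
      rw [Finset.mul_sum, Finset.mul_sum, Finset.mul_sum,
        ← Finset.sum_sub_distrib, ← Finset.sum_add_distrib, ← Finset.sum_sub_distrib,
        ← Finset.sum_add_distrib]
      exact Finset.sum_congr rfl fun b _ => by ring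
    have hT4 : (∑ a, ∑ b, (∑ c, ∑ d, ginv a c * (ginv b d * U c d)) * (Xl a * vol m n p b)) = 0 := by
      calc (∑ a, ∑ b, (∑ c, ∑ d, ginv a c * (ginv b d * U c d)) * (Xl a * vol m n p b))
          = ∑ b, ∑ a, (∑ c, ∑ d, ginv a c * (ginv b d * U c d)) * (Xl a * vol m n p b) :=
            Finset.sum_comm
        _ = ∑ b, (∑ a, Xl a * ∑ c, ∑ d, ginv a c * (ginv b d * U c d)) * vol m n p b := by
            refine Finset.sum_congr rfl fun b _ => ?_
            rw [Finset.sum_mul]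
            exact Finset.sum_congr rfl fun a _ => by ring
        _ = 0 := Finset.sum_eq_zero fun b _ => by rw [hUuX b, zero_mul]
    have hT5 : (∑ a, ∑ b, (∑ c, ∑ d, ginv a c * (ginv b d * U c d)) * (Xl b * vol m n p a)) = 0 := by
      calc (∑ a, ∑ b, (∑ c, ∑ d, ginv a c * (ginv b d * U c d)) * (Xl b * vol m n p a))
          = ∑ a, (∑ b, Xl b * ∑ c, ∑ d, ginv a c * (ginv b d * U c d)) * vol m n p a := by
            refine Finset.sum_congr rfl fun a _ => ?_
            rw [Finset.sum_mul]
            exact Finset.sum_congr rfl fun b _ => by ring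
        _ = 0 := Finset.sum_eq_zero fun a _ => by rw [hUuX2 a, zero_mul]
    rw [hsplit, hT4, hT5, hUu n p, hUu m p, hUu m n] at hbig
    apply hhalf2
    have hmp : star2 ginv vol U m p = -star2 ginv vol U p m := hSanti m p
    linear_combination hbig + Xl n * 2 * hmp
  -- conclusion
  intro m n
  have hDX : (∑ q, (∑ b, ginv q b * delU b) * Xl q) = 0 := by
    calc (∑ q, (∑ b, ginv q b * delU b) * Xl q)
        = ∑ q, ∑ b, ginv q b * delU b * Xl q := by
          refine Finset.sum_congr rfl fun q _ => ?_
          rw [Finset.sum_mul]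
      _ = ∑ b, ∑ q, ginv q b * delU b * Xl q := Finset.sum_comm
      _ = ∑ b, delU b * ∑ q, ginv q b * Xl q := by
          refine Finset.sum_congr rfl fun b _ => ?_
          rw [Finset.mul_sum]
          exact Finset.sum_congr rfl fun q _ => by ring
      _ = ∑ b, Xv b * delU b := by
          refine Finset.sum_congr rfl fun b _ => ?_
          rw [hraise b]; ring
      _ = 0 := hG0
  have hcon : (∑ q, (∑ b, ginv q b * delU b) *
      (Xl m * star2 ginv vol U n q + Xl n * star2 ginv vol U q m + Xl q * star2 ginv vol U m n)) = 0 :=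
    Finset.sum_eq_zero fun q _ => by rw [hXstarU m n q, mul_zero]
  have hcon2 : Xl m * (∑ q, (∑ b, ginv q b * delU b) * star2 ginv vol U n q)
      + Xl n * (∑ q, (∑ b, ginv q b * delU b) * star2 ginv vol U q m)
      + (∑ q, (∑ b, ginv q b * delU b) * Xl q) * star2 ginv vol U m n = 0 := by
    rw [Finset.mul_sum, Finset.mul_sum, Finset.sum_mul, ← Finset.sum_add_distrib,
      ← Finset.sum_add_distrib, ← hcon]
    exact Finset.sum_congr rfl fun q _ => by ring
  have e1 : (∑ q, (∑ b, ginv q b * delU b) * star2 ginv vol U n q) = -Y n := by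
    rw [hY n, ← Finset.sum_neg_distrib]
    refine Finset.sum_congr rfl fun q _ => ?_
    rw [hSanti n q]; ring
  have e2 : (∑ q, (∑ b, ginv q b * delU b) * star2 ginv vol U q m) = Y m := (hY m).symm
  rw [e1, e2, hDX] at hcon2
  linear_combination -hcon2
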